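/- arXiv:2206.00115 — 2 statements merged into one kernel-verified Lean document; each statement's English description precedes it below -/
import Mathlib

section
/- For every natural number p ≥ 1 and every natural number n, the convolution 𝒞_n^{(p)} satisfies the recursion (-1)^p·F_n - n^p = 𝒞_n^{(p)} - 2·∑_{j=0}^{⌊p/2⌋} C(p, 2j+1)·𝒞_n^{(p-2j-1)}, as an identity of integers. -/
/-- The convolution `𝒞_n^{(p)} = ∑_{i=0}^{n} i^p · F_{n-i}`, with the convention
`0^0 = 1` (which is the convention of `(0 : ℤ) ^ 0` in Lean). -/
def fibConv (n p : ℕ) : ℤ :=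
  ∑ i ∈ Finset.range (n + 1), (i : ℤ) ^ p * (Nat.fib (n - i) : ℤ)

/-! Writing `f(x) = x^p`, the sum `2 ∑_j C(p,2j+1) 𝒞_n^{(p-2j-1)}` is the convolution of `F` with
`f(x+1) - f(x-1)`, the odd part of the binomial expansion. Shifting the index of each of the two
convolutions and using `F_{k+2} = F_{k+1} + F_k` leaves only boundary terms, namely `𝒞_n^{(p)}`,
`f(n)`, `f(0)·F_{n+1}` and `f(-1)·F_n`. -/

open Finset

theorem Finset.sum_range_two_mul {M : Type*} [AddCommMonoid M] (f : ℕ → M) (n : ℕ) :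
    ∑ i ∈ range (2 * n), f i = ∑ i ∈ range n, (f (2 * i) + f (2 * i + 1)) := by
  induction n with
  | zero => simp
  | succ n ih => rw [mul_add, mul_one, sum_range_succ, sum_range_succ, sum_range_succ, ih, add_assoc]

theorem add_one_pow_sub_sub_one_pow {R : Type*} [CommRing R] (x : R) (p : ℕ) :
    (x + 1) ^ p - (x - 1) ^ p =
      2 * ∑ j ∈ range (p / 2 + 1), (p.choose (2 * j + 1) : R) * x ^ (p - (2 * j + 1)) := by
  calc (x + 1) ^ p - (x - 1) ^ p
      = ∑ m ∈ range (p + 1), (1 - (-1) ^ m) * x ^ (p - m) * (p.choose m : R) := by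
        rw [add_comm x, sub_eq_neg_add x, add_pow, add_pow, ← sum_sub_distrib]
        refine sum_congr rfl fun m _ => ?_
        ring
    _ = ∑ m ∈ range (2 * (p / 2 + 1)), (1 - (-1) ^ m) * x ^ (p - m) * (p.choose m : R) := by
        refine sum_subset (range_subset_range.2 (by omega)) fun m _ hm => ?_
        rw [Nat.choose_eq_zero_of_lt (by simpa using hm), Nat.cast_zero, mul_zero]
    _ = _ := by
        rw [sum_range_two_mul, mul_sum]
        refine sum_congr rfl fun j _ => ?_
        simp only [pow_succ, pow_mul]
        ring

section FibConvWith

variable {R : Type*} [CommRing R]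

def fibConvWith (f : ℤ → R) (n : ℕ) : R :=
  ∑ i ∈ range (n + 1), f i * (Nat.fib (n - i) : R)

theorem fibConvWith_add_two (f : ℤ → R) (n : ℕ) :
    fibConvWith f (n + 2) = fibConvWith f (n + 1) + fibConvWith f n + f (n + 1) := by
  have hfib : ∀ i ∈ range (n + 1), f i * (Nat.fib (n + 2 - i) : R) =
      f i * (Nat.fib (n + 1 - i) : R) + f i * (Nat.fib (n - i) : R) := fun i hi => by
    rw [show n + 2 - i = n - i + 2 by grind, show n + 1 - i = n - i + 1 by grind, Nat.fib_add_two,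
      Nat.cast_add, mul_add, add_comm]
  rw [fibConvWith, fibConvWith, fibConvWith, sum_range_succ, sum_range_succ, sum_congr rfl hfib,
    sum_add_distrib, sum_range_succ _ (n + 1)]
  simp

theorem fibConvWith_succ (f : ℤ → R) (n : ℕ) :
    fibConvWith f (n + 1) = fibConvWith (fun i => f (i + 1)) n + f 0 * Nat.fib (n + 1) := by
  rw [fibConvWith, fibConvWith, sum_range_succ']
  push_cast
  simp

theorem fibConvWith_comp_sub_one_succ (f : ℤ → R) (n : ℕ) :
    fibConvWith (fun i => f (i - 1)) (n + 1) = fibConvWith f n + f (-1) * Nat.fib (n + 1) := by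
  rw [fibConvWith, fibConvWith, sum_range_succ']
  push_cast
  simp

theorem fibConvWith_central_difference (f : ℤ → R) (n : ℕ) :
    fibConvWith (fun i => f (i + 1) - f (i - 1)) n =
      fibConvWith f n + f n - f 0 * Nat.fib (n + 1) - f (-1) * Nat.fib n := by
  have hsub : fibConvWith (fun i => f (i + 1) - f (i - 1)) n =
      fibConvWith (fun i => f (i + 1)) n - fibConvWith (fun i => f (i - 1)) n := by
    simp only [fibConvWith, sub_mul, sum_sub_distrib]
  rcases n with _ | n
  · simp [fibConvWith]
  · rw [hsub, fibConvWith_comp_sub_one_succ, Nat.cast_succ]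
    linear_combination fibConvWith_add_two f n - fibConvWith_succ f (n + 1)

end FibConvWith

theorem fibConv_eq_fibConvWith (n p : ℕ) : fibConv n p = fibConvWith (· ^ p) n := rfl

/-- For every `p ≥ 1` and every `n : ℕ`,
`(-1)^p·F_n - n^p = 𝒞_n^{(p)} - 2·∑_{j=0}^{⌊p/2⌋} C(p,2j+1)·𝒞_n^{(p-2j-1)}`. -/
theorem fibConv_recursion (p : ℕ) (hp : 1 ≤ p) (n : ℕ) :
    (-1) ^ p * (Nat.fib n : ℤ) - (n : ℤ) ^ p =
      fibConv n p - 2 * ∑ j ∈ Finset.range (p / 2 + 1),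
        (p.choose (2 * j + 1) : ℤ) * fibConv n (p - (2 * j + 1)) := by
  have hodd : 2 * ∑ j ∈ range (p / 2 + 1), (p.choose (2 * j + 1) : ℤ) * fibConv n (p - (2 * j + 1))
      = fibConvWith (fun x : ℤ => (x + 1) ^ p - (x - 1) ^ p) n := by
    simp only [fibConv_eq_fibConvWith, fibConvWith, add_one_pow_sub_sub_one_pow, mul_sum, sum_mul]
    rw [sum_comm]
    refine sum_congr rfl fun i _ => sum_congr rfl fun j _ => ?_
    ring
  rw [hodd, fibConvWith_central_difference (· ^ p), fibConv_eq_fibConvWith, zero_pow (by omega)]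
  ring
end

section
/- For every natural number k ≥ 1, B_k = 1 + ∑_{j=0}^{k-1} (2^{k-j} - 1)·C(k,j)·B_j. -/
/-- The sequence `B` with `B_0 = 1` and
`B_p = 2·∑_{j=0}^{⌊p/2⌋} C(p,2j+1)·B_{p-2j-1}` for `p > 0`. -/
def B : ℕ → ℤ
  | 0 => 1
  | p + 1 => 2 * ∑ j ∈ Finset.range ((p + 1) / 2 + 1),
      (((p + 1).choose (2 * j + 1) : ℤ)) * B (p - 2 * j)
  decreasing_by exact Nat.lt_succ_of_le (Nat.sub_le p (2 * j))

/-!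
With `E(x) = ∑ B_n xⁿ/n!`, the recurrence says `E = 1 + (eˣ - e⁻ˣ) E`. Multiplying by `eˣ`
gives `E = eˣ + (e²ˣ - eˣ) E`, and comparing the coefficients of `xᵏ/k!` is Hoggatt's formula
(the term `j = k` of the binomial convolution vanishes since `2⁰ - 1 = 0`).
-/

open PowerSeries Finset Nat

theorem Finset.sum_range_two_mul_one_sub_neg_one_pow_mul {R : Type*} [CommRing R]
    (f : ℕ → R) (m : ℕ) :
    ∑ i ∈ range (2 * m), (1 - (-1) ^ i) * f i = 2 * ∑ j ∈ range m, f (2 * j + 1) := by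
  induction m with
  | zero => simp
  | succ m ih =>
    rw [show 2 * (m + 1) = 2 * m + 1 + 1 by ring, sum_range_succ, sum_range_succ, ih,
      sum_range_succ, pow_succ, pow_mul]
    ring

theorem B_succ_eq_sum (p : ℕ) :
    B (p + 1) = ∑ i ∈ range (p + 2), (1 - (-1) ^ i) * ((p + 1).choose i * B (p + 1 - i)) := by
  have hcover : range (p + 2) ⊆ range (2 * ((p + 1) / 2 + 1)) := range_subset_range.2 (by omega)
  rw [B, sum_subset hcover, sum_range_two_mul_one_sub_neg_one_pow_mul]
  · simp only [Nat.add_sub_add_right]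
  · intro i _ hi
    rw [mem_range, not_lt] at hi
    rw [choose_eq_zero_of_lt (by omega), Nat.cast_zero, zero_mul, mul_zero]

namespace PowerSeries

variable {K : Type*} [Field K]

noncomputable def egf (a : ℕ → K) : K⟦X⟧ := mk fun n => a n / n !

@[simp]
theorem coeff_egf (a : ℕ → K) (n : ℕ) : coeff n (egf a) = a n / n ! := coeff_mk _ _

theorem coeff_egf_mul [CharZero K] (a b : ℕ → K) (n : ℕ) :
    coeff n (egf a * egf b) = (∑ i ∈ range (n + 1), n.choose i * a i * b (n - i)) / n ! := by
  rw [coeff_mul, sum_antidiagonal_eq_sum_range_succ fun i j => coeff i (egf a) * coeff j (egf b),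
    sum_div]
  refine sum_congr rfl fun i hi => ?_
  have hin : i ≤ n := Nat.lt_succ_iff.1 (mem_range.1 hi)
  have hn : (n ! : K) ≠ 0 := by simp [factorial_ne_zero]
  rw [coeff_egf, coeff_egf, choose_eq_factorial_div_factorial hin,
    Nat.cast_div (factorial_mul_factorial_dvd_factorial hin) (by simp [factorial_ne_zero])]
  push_cast
  field_simp

theorem rescale_egf (c : K) (a : ℕ → K) : rescale c (egf a) = egf fun n => c ^ n * a n := by
  ext n
  simp [mul_div_assoc]

theorem egf_sub (a b : ℕ → K) : egf a - egf b = egf (a - b) := by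
  ext n
  simp [sub_div]

variable [Algebra ℚ K]

theorem exp_eq_egf : exp K = egf 1 := by
  ext n
  simp

theorem exp_sub_evalNegHom_exp : exp K - evalNegHom (exp K) = egf fun n => 1 - (-1) ^ n := by
  rw [evalNegHom, exp_eq_egf, rescale_egf, egf_sub]
  simp only [Pi.one_apply, mul_one, Pi.sub_def]

theorem exp_sq_sub_exp : exp K ^ 2 - exp K = egf fun n => 2 ^ n - 1 := by
  rw [exp_pow_eq_rescale_exp, exp_eq_egf, rescale_egf, egf_sub]
  simp only [Pi.one_apply, mul_one, Nat.cast_ofNat, Pi.sub_def]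

end PowerSeries

theorem egf_B_eq_one_add :
    egf (fun n => (B n : ℚ)) = 1 + (exp ℚ - evalNegHom (exp ℚ)) * egf (fun n => (B n : ℚ)) := by
  ext n
  rw [exp_sub_evalNegHom_exp, map_add, coeff_one, coeff_egf_mul, coeff_egf]
  rcases n with _ | p
  · simp [B]
  · rw [if_neg p.succ_ne_zero, zero_add, B_succ_eq_sum]
    push_cast
    exact congrArg (· / _) (sum_congr rfl fun i _ => by ring)

theorem egf_B_eq_exp_add :
    egf (fun n => (B n : ℚ)) = exp ℚ + egf (fun n => (B n : ℚ)) * (exp ℚ ^ 2 - exp ℚ) := by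
  linear_combination
    exp ℚ * egf_B_eq_one_add - egf (fun n => (B n : ℚ)) * exp_mul_exp_neg_eq_one (A := ℚ)

theorem B_hoggatt_general (k : ℕ) :
    B k = 1 + ∑ j ∈ Finset.range k, ((2 : ℤ) ^ (k - j) - 1) * (k.choose j : ℤ) * B j := by
  have h := congrArg (coeff k) egf_B_eq_exp_add
  rw [exp_sq_sub_exp, exp_eq_egf, map_add, coeff_egf_mul, coeff_egf, coeff_egf, ← add_div,
    div_left_inj' (by simp [factorial_ne_zero]), sum_range_succ, Nat.sub_self] at h
  have hq : (B k : ℚ) = 1 + ∑ j ∈ range k, ((2 : ℚ) ^ (k - j) - 1) * k.choose j * B j := by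
    rw [h, pow_zero, sub_self, mul_zero, add_zero, Pi.one_apply]
    exact congrArg _ (sum_congr rfl fun j _ => by ring)
  exact_mod_cast hq

/-- **Hoggatt's formula.** For every `k ≥ 1`,
`B_k = 1 + ∑_{j=0}^{k-1} (2^(k-j) - 1)·C(k,j)·B_j`. -/
theorem B_hoggatt (k : ℕ) (hk : 1 ≤ k) :
    B k = 1 + ∑ j ∈ Finset.range k, ((2 : ℤ) ^ (k - j) - 1) * (k.choose j : ℤ) * B j :=
  B_hoggatt_general k
end
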